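/- For a connected bipartite graph with non-oriented incidence-type operator on arcs, the kernel of C̃ (where (C̃ψ)(v) = Σ_{a ∈ A_0 : t(a)=v} ψ(a) + Σ_{a ∈ A_0 : o(a)=v} ψ(a)) decomposes as ker C̃ = (ker d ∩ H₊) ⊕ H₋, where H₊, H₋ are the symmetric/antisymmetric arc-function subspaces and (dφ)(v) = (1/√deg v) Σ_{t(a)=v} φ(a). -/
import Mathlib


/-- For the non-oriented incidence operator `C̃` on arc-functions of a finite
graph, `ker C̃ = (ker d ∩ H₊) ⊕ H₋`, where `H₊`/`H₋` are the symmetric and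
antisymmetric arc functions and `(dφ)(v) = deg(v)^{-1/2} Σ_{t(a)=v} φ(a)`. -/
theorem stmt_17 {V : Type} [Fintype V] [DecidableEq V]
    (G : SimpleGraph V) [DecidableRel G.Adj]
    (dop Ct : (G.Dart → ℂ) → (V → ℂ))
    (hd : ∀ (φ : G.Dart → ℂ) (v : V), dop φ v =
      (1 / ((Real.sqrt (G.degree v) : ℝ) : ℂ)) *
        ∑ a : G.Dart, if a.snd = v then φ a else 0)
    (hC : ∀ (ψ : G.Dart → ℂ) (v : V), Ct ψ v =
      (∑ a : G.Dart, if a.snd = v then ψ a else 0) +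
      ∑ a : G.Dart, if a.fst = v then ψ a else 0) :
    -- ker C̃ is the (direct) sum of ker d ∩ H₊ and H₋ …
    (∀ ψ : G.Dart → ℂ, Ct ψ = 0 ↔
      ∃ f g : G.Dart → ℂ, (dop f = 0 ∧ ∀ a : G.Dart, f a.symm = f a) ∧
        (∀ a : G.Dart, g a.symm = -g a) ∧ ψ = f + g) ∧
    -- … and the sum is direct: the two subspaces meet trivially
    (∀ h : G.Dart → ℂ, (dop h = 0 ∧ ∀ a : G.Dart, h a.symm = h a) →
      (∀ a : G.Dart, h a.symm = -h a) → h = 0) := by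
  -- swap-sum identity
  have hswap : ∀ (ψ : G.Dart → ℂ) (v : V),
      (∑ a : G.Dart, if a.fst = v then ψ a else 0) =
      ∑ a : G.Dart, if a.snd = v then ψ a.symm else 0 := by
    intro ψ v
    apply Fintype.sum_equiv (Function.Involutive.toPerm _ (fun a : G.Dart => a.symm_symm))
    intro a
    simp [Function.Involutive.toPerm]
  -- `Ct ψ v` as a single sum
  have hCt : ∀ (ψ : G.Dart → ℂ) (v : V), Ct ψ v =
      ∑ a : G.Dart, if a.snd = v then ψ a + ψ a.symm else 0 := by
    intro ψ v
    rw [hC, hswap, ← Finset.sum_add_distrib]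
    congr 1; funext a; split <;> simp
  -- degree-zero case: the local sum is trivially zero
  have hdeg0 : ∀ (φ : G.Dart → ℂ) (v : V), G.degree v = 0 →
      (∑ a : G.Dart, if a.snd = v then φ a else 0) = 0 := by
    intro φ v hv
    apply Finset.sum_eq_zero
    intro a _
    rw [if_neg]
    intro h
    have : 0 < G.degree v := by
      rw [G.degree_pos_iff_exists_adj]
      exact ⟨a.fst, h ▸ a.adj.symm⟩
    omega
  -- `dop φ = 0` iff all local sums vanish
  have hdop : ∀ (φ : G.Dart → ℂ), dop φ = 0 ↔
      ∀ v : V, (∑ a : G.Dart, if a.snd = v then φ a else 0) = 0 := by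
    intro φ
    constructor
    · intro h v
      have h0 := congrFun h v
      rw [hd] at h0
      by_cases hc : ((Real.sqrt (G.degree v) : ℝ) : ℂ) = 0
      · have : Real.sqrt (G.degree v) = 0 := by exact_mod_cast hc
        have : (G.degree v : ℝ) = 0 := by
          have := Real.sqrt_eq_zero (by positivity) |>.mp this
          exact this
        exact hdeg0 φ v (by exact_mod_cast this)
      · simpa [hc] using h0
    · intro h
      funext v
      rw [hd, h v]
      simp
  constructor
  · intro ψ
    constructor
    · intro hψ
      refine ⟨fun a => (ψ a + ψ a.symm) / 2, fun a => (ψ a - ψ a.symm) / 2,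
        ⟨?_, ?_⟩, ?_, ?_⟩
      · rw [hdop]
        intro v
        have h0 := congrFun hψ v
        rw [hCt] at h0
        have : (∑ a : G.Dart, if a.snd = v then (ψ a + ψ a.symm) / 2 else 0)
            = (∑ a : G.Dart, if a.snd = v then ψ a + ψ a.symm else 0) / 2 := by
          rw [Finset.sum_div]
          congr 1; funext a; split <;> simp
        rw [this, h0]
        simp
      · intro a; simp [a.symm_symm]; ring
      · intro a; simp [a.symm_symm]; ring
      · funext a; simp; ring
    · rintro ⟨f, g, ⟨hf0, hfs⟩, hgs, rfl⟩
      funext v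
      rw [hCt]
      have hloc := (hdop f).mp hf0 v
      have : (∑ a : G.Dart, if a.snd = v then (f + g) a + (f + g) a.symm else 0)
          = (∑ a : G.Dart, if a.snd = v then f a else 0) * 2 := by
        rw [Finset.sum_mul]
        congr 1; funext a
        split
        · simp [hfs a, hgs a]; ring
        · simp
      rw [this, hloc]
      simp
  · intro h ⟨_, hs⟩ ha
    funext a
    have h1 := hs a
    have h2 := ha a
    have : h a = -h a := h1 ▸ h2
    simp only [Pi.zero_apply]
    linear_combination this / 2
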